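/- arXiv:1512.06995 — 7 statements merged into one kernel-verified Lean document; each statement's English description precedes it below -/
import Mathlib

section
/- Let (n,p) be a limit solution with initial datum n⁰. Then for every t > 0: (i) Δp(t) + G(p(t)) ≥ 0 in D'(ℝ^N), i.e. for every nonnegative φ ∈ C_c^∞(ℝ^N), ∫_{ℝ^N} (p(x,t) Δφ(x) + G(p(x,t)) φ(x)) dx ≥ 0; (ii) Δp(t) + G(p(t)) = 0 in D'(Int Ω(t)), i.e. for every φ ∈ C_c^∞(ℝ^N) whose support is contained in the interior of Ω(t) = {x : p(x,t) > 0}, ∫_{ℝ^N} (p(x,t) Δφ(x) + G(p(x,t)) φ(x)) dx = 0. -/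
open MeasureTheory Metric Set Filter Real
open scoped ENNReal RealInnerProductSpace

noncomputable section

/-- Euclidean space `ℝ^N`. -/
abbrev Euc (N : ℕ) : Type := EuclideanSpace ℝ (Fin N)

/-- The spatial Laplacian of a function on `ℝ^N`. -/
def lap {N : ℕ} (φ : Euc N → ℝ) (x : Euc N) : ℝ :=
  ∑ i : Fin N, fderiv ℝ (fderiv ℝ φ) x (EuclideanSpace.single i 1) (EuclideanSpace.single i 1)

/-- Smooth, compactly supported test functions on `ℝ^N`. -/
def IsTestFun {N : ℕ} (φ : Euc N → ℝ) : Prop :=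
  ContDiff ℝ (⊤ : ℕ∞) φ ∧ HasCompactSupport φ

/-- Smooth test functions compactly supported in `Q = ℝ^N × (0,∞)`. -/
def IsTestFunQ {N : ℕ} (φ : Euc N × ℝ → ℝ) : Prop :=
  ContDiff ℝ (⊤ : ℕ∞) φ ∧ HasCompactSupport φ ∧ tsupport φ ⊆ {q : Euc N × ℝ | 0 < q.2}

/-- The parabolic domain `Q = ℝ^N × (0,∞)`. -/
def Qset (N : ℕ) : Set (Euc N × ℝ) := Set.univ ×ˢ Set.Ioi (0 : ℝ)

/-- The hypotheses on the growth function `G`: it is `C¹`, strictly decreasing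
(negative derivative) on `[0,∞)`, and vanishes at the homeostatic pressure `p_M > 0`. -/
structure GCond (G : ℝ → ℝ) (pM : ℝ) : Prop where
  smooth : ContDiff ℝ 1 G
  deriv_neg : ∀ q : ℝ, 0 ≤ q → deriv G q < 0
  pM_pos : 0 < pM
  G_pM : G pM = 0

/-- A (stiff) limit solution `(n,p)` of `∂ₜ n = Δp + n G(p)` with initial datum `n0`,
with the pressure taken in its good (pointwise) representative, and `gp` the weak
spatial gradient of `p`. -/
structure LimitSolution (N : ℕ) (G : ℝ → ℝ) (pM : ℝ) (n0 : Euc N → ℝ)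
    (n p : Euc N → ℝ → ℝ) (gp : Euc N → ℝ → Euc N) : Prop where
  n0_int : Integrable n0
  n0_range : ∀ᵐ x : Euc N ∂volume, 0 ≤ n0 x ∧ n0 x ≤ 1
  n_meas : Measurable fun q : Euc N × ℝ => n q.1 q.2
  p_meas : Measurable fun q : Euc N × ℝ => p q.1 q.2
  gp_meas : Measurable fun q : Euc N × ℝ => gp q.1 q.2
  n_range : ∀ᵐ q : Euc N × ℝ ∂volume, 0 < q.2 → 0 ≤ n q.1 q.2 ∧ n q.1 q.2 ≤ 1
  p_range : ∀ (x : Euc N) (t : ℝ), 0 ≤ t → 0 ≤ p x t ∧ p x t ≤ pM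
  saturation : ∀ᵐ q : Euc N × ℝ ∂volume, 0 < q.2 → n q.1 q.2 < 1 → p q.1 q.2 = 0
  n_integrable : ∀ t : ℝ, 0 ≤ t → Integrable fun x => n x t
  n_L1cont : ∀ t₀ : ℝ, 0 ≤ t₀ →
    Tendsto (fun t => ∫ x, |n x t - n x t₀|) (nhdsWithin t₀ (Set.Ici 0)) (nhds 0)
  n_init : ∀ᵐ x : Euc N ∂volume, n x 0 = n0 x
  mass : ∀ t : ℝ, 0 ≤ t → ∫ x, n x t ≤ Real.exp (G 0 * t) * ∫ x, n0 x
  gp_sq_int : ∀ T : ℝ, 0 < T →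
    IntegrableOn (fun q : Euc N × ℝ => ‖gp q.1 q.2‖ ^ 2) (Set.univ ×ˢ Set.Ioc 0 T)
  gp_weak : ∀ φ : Euc N × ℝ → ℝ, IsTestFunQ φ → ∀ i : Fin N,
    ∫ q in Qset N, p q.1 q.2 * fderiv ℝ (fun y => φ (y, q.2)) q.1 (EuclideanSpace.single i 1)
      = - ∫ q in Qset N, gp q.1 q.2 i * φ q
  pde : ∀ φ : Euc N × ℝ → ℝ, IsTestFunQ φ →
    ∫ q in Qset N, (n q.1 q.2 * deriv (fun s => φ (q.1, s)) q.2
      + p q.1 q.2 * lap (fun y => φ (y, q.2)) q.1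
      + n q.1 q.2 * G (p q.1 q.2) * φ q) = 0
  p_time_mono_distrib : ∀ φ : Euc N × ℝ → ℝ, IsTestFunQ φ → (∀ q, 0 ≤ φ q) →
    ∫ q in Qset N, p q.1 q.2 * deriv (fun s => φ (q.1, s)) q.2 ≤ 0
  semiconvexity : ∀ φ : Euc N × ℝ → ℝ, IsTestFunQ φ → (∀ q, 0 ≤ φ q) →
    0 ≤ ∫ q in Qset N, (p q.1 q.2 * lap (fun y => φ (y, q.2)) q.1 + G (p q.1 q.2) * φ q)
  p_mono : ∀ x : Euc N, MonotoneOn (fun t => p x t) (Set.Ici 0)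
  p_right_cont : ∀ (x : Euc N) (t₀ : ℝ), 0 ≤ t₀ →
    Tendsto (fun t => p x t) (nhdsWithin t₀ (Set.Ioi t₀)) (nhds (p x t₀))
  p_usc : UpperSemicontinuousOn (fun q : Euc N × ℝ => p q.1 q.2) (Set.univ ×ˢ Set.Ici 0)
  p_mean : ∀ (x₀ : Euc N) (t₀ : ℝ), 0 ≤ t₀ →
    Tendsto (fun r : ℝ => ((volume (ball x₀ r)).toReal)⁻¹ *
        ∫ x in ball x₀ r, (r ^ 2)⁻¹ * ∫ s in Set.Ioc t₀ (t₀ + r ^ 2), p x s)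
      (nhdsWithin 0 (Set.Ioi 0)) (nhds (p x₀ t₀))

/-- The Baiocchi-type variable `w(x,t) = ∫₀ᵗ e^{-G(0)s} p(x,s) ds`. -/
def wFun {N : ℕ} (G : ℝ → ℝ) (p : Euc N → ℝ → ℝ) (x : Euc N) (t : ℝ) : ℝ :=
  ∫ s in (0:ℝ)..t, Real.exp (-(G 0) * s) * p x s

/-- The set `Ω(t) = {p(·,t) > 0}`. -/
def Omega {N : ℕ} (p : Euc N → ℝ → ℝ) (t : ℝ) : Set (Euc N) := {x | 0 < p x t}

/-- The set `Ω̃(t) = {w(·,t) > 0}`. -/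
def OmegaTilde {N : ℕ} (G : ℝ → ℝ) (p : Euc N → ℝ → ℝ) (t : ℝ) : Set (Euc N) :=
  {x | 0 < wFun G p x t}

/-- `F̃(x,t) = e^{-G(0)t} n(x,t) - n⁰(x) + ∫₀ᵗ e^{-G(0)s} n(x,s)(G(0) - G(p(x,s))) ds`. -/
def Ftilde {N : ℕ} (G : ℝ → ℝ) (n0 : Euc N → ℝ) (n p : Euc N → ℝ → ℝ)
    (x : Euc N) (t : ℝ) : ℝ :=
  Real.exp (-(G 0) * t) * n x t - n0 x
    + ∫ s in (0:ℝ)..t, Real.exp (-(G 0) * s) * n x s * (G 0 - G (p x s))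

/-- `F(x,t) = e^{-G(0)t} - n⁰(x) + ∫₀ᵗ e^{-G(0)s} (G(0) - G(p(x,s))) ds`. -/
def Ffun {N : ℕ} (G : ℝ → ℝ) (n0 : Euc N → ℝ) (p : Euc N → ℝ → ℝ)
    (x : Euc N) (t : ℝ) : ℝ :=
  Real.exp (-(G 0) * t) - n0 x
    + ∫ s in (0:ℝ)..t, Real.exp (-(G 0) * s) * (G 0 - G (p x s))


/-! Test the space-time relations for `p` against `ψ(x) χₖ(s)`, where `χₖ` is a smooth probability
density supported in `[t, t + 1/(k+1)]`. Since `p` is nondecreasing and right-continuous in time,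
the averages `∫ χₖ(s) p(x,s) ds` and `∫ χₖ(s) G(p(x,s)) ds` converge to `p(x,t)` and `G(p(x,t))`,
and dominated convergence in `x` carries semiconvexity over to time `t`. For the equality, on
`supp ψ ⊆ Ω(t)` monotonicity gives `p(x,s) ≥ p(x,t) > 0` for `s ≥ t`, so `n = 1` there and the
term `n ∂ₜ(ψ χₖ)` integrates to `(∫ ψ) (∫ χₖ') = 0`. -/

structure IsRightBump (χ : ℝ → ℝ) (t ε : ℝ) : Prop where
  contDiff : ContDiff ℝ (⊤ : ℕ∞) χ
  nonneg : ∀ s, 0 ≤ χ s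
  tsupport_subset : tsupport χ ⊆ Icc t (t + ε)
  integral_eq_one : ∫ s, χ s = 1

theorem exists_isRightBump (t : ℝ) {ε : ℝ} (hε : 0 < ε) : ∃ χ, IsRightBump χ t ε := by
  let f : ContDiffBump (t + ε / 2) := ⟨ε / 4, ε / 2, by positivity, by linarith⟩
  refine ⟨f.normed volume, f.contDiff_normed, f.nonneg_normed, ?_, f.integral_normed⟩
  rw [f.tsupport_normed_eq, Real.closedBall_eq_Icc]
  exact Icc_subset_Icc (by simp [f]) (by simp [f]; linarith)

namespace IsRightBump

variable {χ : ℝ → ℝ} {t ε : ℝ}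

theorem hasCompactSupport (hχ : IsRightBump χ t ε) : HasCompactSupport χ :=
  HasCompactSupport.of_support_subset_isCompact isCompact_Icc
    ((subset_tsupport χ).trans hχ.tsupport_subset)

theorem integrable (hχ : IsRightBump χ t ε) : Integrable χ :=
  .of_integral_ne_zero (by simp [hχ.integral_eq_one])

theorem mem_Icc_of_ne_zero (hχ : IsRightBump χ t ε) {s : ℝ} (hs : χ s ≠ 0) :
    s ∈ Icc t (t + ε) :=
  hχ.tsupport_subset (subset_tsupport χ hs)

theorem eq_zero_of_notMem (hχ : IsRightBump χ t ε) {s : ℝ} (hs : s ∉ Icc t (t + ε)) :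
    χ s = 0 :=
  by_contra fun h => hs (hχ.mem_Icc_of_ne_zero h)

theorem eq_zero_of_nonpos (hχ : IsRightBump χ t ε) (ht : 0 < t) {s : ℝ} (hs : s ≤ 0) : χ s = 0 :=
  hχ.eq_zero_of_notMem fun h => (hs.trans_lt ht).not_ge h.1

theorem tsupport_subset_Ioi (hχ : IsRightBump χ t ε) (ht : 0 < t) : tsupport χ ⊆ Ioi 0 :=
  hχ.tsupport_subset.trans fun _ hs => ht.trans_le hs.1

theorem deriv_eq_zero_of_notMem (hχ : IsRightBump χ t ε) {s : ℝ} (hs : s ∉ Icc t (t + ε)) :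
    deriv χ s = 0 :=
  Function.notMem_support.1 fun h => hs (hχ.tsupport_subset (support_deriv_subset h))

theorem deriv_eq_zero_of_nonpos (hχ : IsRightBump χ t ε) (ht : 0 < t) {s : ℝ} (hs : s ≤ 0) :
    deriv χ s = 0 :=
  hχ.deriv_eq_zero_of_notMem fun h => (hs.trans_lt ht).not_ge h.1

theorem integrable_deriv (hχ : IsRightBump χ t ε) : Integrable (deriv χ) :=
  (hχ.contDiff.continuous_deriv (by simp)).integrable_of_hasCompactSupport
    hχ.hasCompactSupport.deriv

theorem integral_deriv_eq_zero (hχ : IsRightBump χ t ε) : ∫ s, deriv χ s = 0 :=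
  integral_eq_zero_of_hasDerivAt_of_integrable
    (fun s => (hχ.contDiff.differentiable (by simp) s).hasDerivAt) hχ.integrable_deriv
    hχ.integrable

theorem abs_mul_le (hχ : IsRightBump χ t ε) {f : ℝ → ℝ} {C : ℝ}
    (hf : ∀ s ∈ Icc t (t + ε), |f s| ≤ C) (s : ℝ) : |χ s * f s| ≤ χ s * C := by
  by_cases hs : χ s = 0
  · simp [hs]
  · rw [abs_mul, abs_of_nonneg (hχ.nonneg s)]
    exact mul_le_mul_of_nonneg_left (hf s (hχ.mem_Icc_of_ne_zero hs)) (hχ.nonneg s)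

end IsRightBump

theorem tendsto_integral_mul_of_isRightBump {f : ℝ → ℝ} {t : ℝ}
    (hf : ContinuousWithinAt f (Ici t) t) {χ : ℕ → ℝ → ℝ} {ε : ℕ → ℝ}
    (hε : Tendsto ε atTop (nhds 0)) (hχ : ∀ k, IsRightBump (χ k) t (ε k))
    (hfχ : ∀ k, Integrable fun s => χ k s * f s) :
    Tendsto (fun k => ∫ s, χ k s * f s) atTop (nhds (f t)) := by
  rw [Metric.tendsto_atTop]
  intro δ hδ
  obtain ⟨η, hη, hfη⟩ := Metric.continuousWithinAt_iff.1 hf (δ / 2) (by positivity)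
  obtain ⟨K, hK⟩ := Metric.tendsto_atTop.1 hε η hη
  refine ⟨K, fun k hk => ?_⟩
  have hεη : ε k < η := lt_of_abs_lt (by simpa [Real.dist_eq] using hK k hk)
  have hclose : ∀ s, ‖χ k s * (f s - f t)‖ ≤ χ k s * (δ / 2) :=
    (hχ k).abs_mul_le fun s hs => by
      refine (hfη hs.1 ?_).le
      rw [Real.dist_eq, abs_of_nonneg (sub_nonneg.2 hs.1)]
      linarith [hs.2]
  have hdiff : (∫ s, χ k s * f s) - f t = ∫ s, χ k s * (f s - f t) := by
    simp only [mul_sub]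
    rw [integral_sub (hfχ k) ((hχ k).integrable.mul_const _), integral_mul_const,
      (hχ k).integral_eq_one, one_mul]
  calc dist (∫ s, χ k s * f s) (f t) = ‖∫ s, χ k s * (f s - f t)‖ := by
        rw [dist_eq_norm, hdiff]
    _ ≤ ∫ s, χ k s * (δ / 2) := norm_integral_le_of_norm_le
        ((hχ k).integrable.mul_const _) (ae_of_all _ hclose)
    _ < δ := by rw [integral_mul_const, (hχ k).integral_eq_one]; linarith

section Fubini

variable {α : Type*} [MeasurableSpace α] {μ : Measure α} {h : α → ℝ → ℝ}
  {g : α → ℝ} {t : ℝ}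

theorem IsRightBump.integrable_prod_mul {χ : ℝ → ℝ} {ε : ℝ} (hχ : IsRightBump χ t ε)
    (hh : Measurable (Function.uncurry h)) (hg : Integrable g μ)
    (hbound : ∀ x s, t ≤ s → |h x s| ≤ g x) :
    Integrable (fun q : α × ℝ => χ q.2 * h q.1 q.2) (μ.prod volume) := by
  refine (hg.mul_prod hχ.integrable).mono'
    ((hχ.contDiff.continuous.measurable.comp measurable_snd).mul hh).aestronglyMeasurable
    (ae_of_all _ fun q => ?_)
  rw [mul_comm (g q.1)]
  exact hχ.abs_mul_le (fun s hs => hbound q.1 s hs.1) q.2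

theorem tendsto_integral_prod_mul_of_isRightBump [SFinite μ]
    (hh : Measurable (Function.uncurry h)) (hg : Integrable g μ)
    (hbound : ∀ x s, t ≤ s → |h x s| ≤ g x) (hcont : ∀ x, ContinuousWithinAt (h x) (Ici t) t)
    {χ : ℕ → ℝ → ℝ} {ε : ℕ → ℝ} (hε : Tendsto ε atTop (nhds 0))
    (hχ : ∀ k, IsRightBump (χ k) t (ε k)) :
    Tendsto (fun k => ∫ q : α × ℝ, χ k q.2 * h q.1 q.2 ∂μ.prod volume) atTop
      (nhds (∫ x, h x t ∂μ)) := by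
  have hmeas : ∀ k, Measurable fun q : α × ℝ => χ k q.2 * h q.1 q.2 := fun k =>
    ((hχ k).contDiff.continuous.measurable.comp measurable_snd).mul hh
  have hbump : ∀ k x s, ‖χ k s * h x s‖ ≤ χ k s * g x := fun k x =>
    (hχ k).abs_mul_le fun s hs => hbound x s hs.1
  simp_rw [fun k => integral_prod _ ((hχ k).integrable_prod_mul hh hg hbound)]
  refine tendsto_integral_of_dominated_convergence g
    (fun k => (hmeas k).stronglyMeasurable.integral_prod_right'.aestronglyMeasurable) hg
    (fun k => ae_of_all _ fun x => ?_)
    (ae_of_all _ fun x => tendsto_integral_mul_of_isRightBump (hcont x) hε hχ fun k => ?_)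
  · refine (norm_integral_le_of_norm_le ((hχ k).integrable.mul_const (g x))
      (ae_of_all _ (hbump k x))).trans_eq ?_
    rw [integral_mul_const, (hχ k).integral_eq_one, one_mul]
  · exact ((hχ k).integrable.mul_const (g x)).mono'
      ((hmeas k).comp measurable_prodMk_left).aestronglyMeasurable (ae_of_all _ (hbump k x))

end Fubini

section Laplacian

variable {N : ℕ} {ψ : Euc N → ℝ}

theorem lap_mul_const (c : ℝ) (x : Euc N) :
    lap (fun y => ψ y * c) x = c * lap ψ x := by
  have h1 : fderiv ℝ (fun y => ψ y * c) = c • fderiv ℝ ψ := by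
    rw [← fderiv_const_smul_field]
    congr with y
    exact mul_comm _ _
  have h2 : fderiv ℝ (c • fderiv ℝ ψ) = c • fderiv ℝ (fderiv ℝ ψ) :=
    fderiv_const_smul_field (𝕜 := ℝ) (f := fderiv ℝ ψ) c
  simp only [lap, h1, h2, Finset.mul_sum]
  rfl

theorem continuous_lap (hψ : ContDiff ℝ 2 ψ) : Continuous (lap ψ) := by
  have h2 : Continuous (fderiv ℝ (fderiv ℝ ψ)) :=
    (hψ.fderiv_right (m := 1) (by norm_num)).continuous_fderiv one_ne_zero
  exact continuous_finsetSum _ fun i _ => (h2.clm_apply continuous_const).clm_apply continuous_const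

theorem lap_eq_zero_of_notMem_tsupport {x : Euc N} (hx : x ∉ tsupport ψ) : lap ψ x = 0 := by
  have h2 : fderiv ℝ (fderiv ℝ ψ) x = 0 := image_eq_zero_of_notMem_tsupport
    fun h => hx (tsupport_fderiv_subset ℝ (tsupport_fderiv_subset ℝ h))
  simp [lap, h2]

theorem HasCompactSupport.lap (hψ : HasCompactSupport ψ) : HasCompactSupport (lap ψ) :=
  hψ.mono' fun _ hx => by_contra fun h => hx (lap_eq_zero_of_notMem_tsupport h)

end Laplacian

section TestFunction

variable {N : ℕ} {ψ : Euc N → ℝ}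

theorem IsTestFun.integrable (hψ : IsTestFun ψ) : Integrable ψ :=
  hψ.1.continuous.integrable_of_hasCompactSupport hψ.2

theorem IsTestFun.continuous_lap (hψ : IsTestFun ψ) : Continuous (lap ψ) :=
  _root_.continuous_lap (hψ.1.of_le (by norm_cast))

theorem IsTestFun.integrable_lap (hψ : IsTestFun ψ) : Integrable (lap ψ) :=
  hψ.continuous_lap.integrable_of_hasCompactSupport hψ.2.lap

theorem IsTestFun.isTestFunQ_mul (hψ : IsTestFun ψ) {χ : ℝ → ℝ}
    (hχ : ContDiff ℝ (⊤ : ℕ∞) χ) (hχc : HasCompactSupport χ) (hχ0 : tsupport χ ⊆ Ioi 0) :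
    IsTestFunQ fun q : Euc N × ℝ => ψ q.1 * χ q.2 :=
  ⟨(hψ.1.comp contDiff_fst).mul (hχ.comp contDiff_snd),
    .of_support_subset_isCompact (hψ.2.isCompact.prod hχc.isCompact) fun _ hq =>
      ⟨subset_tsupport _ (left_ne_zero_of_mul hq), subset_tsupport _ (right_ne_zero_of_mul hq)⟩,
    tsupport_mul_subset_right.trans
      ((tsupport_comp_subset_preimage χ continuous_snd).trans fun _ hq => hχ0 hq)⟩

end TestFunction

theorem setIntegral_Qset_eq_integral {N : ℕ} {F : Euc N × ℝ → ℝ} (hF : ∀ q, q.2 ≤ 0 → F q = 0) :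
    ∫ q in Qset N, F q = ∫ q, F q :=
  setIntegral_eq_integral_of_forall_compl_eq_zero fun q hq => hF q (by simpa [Qset] using hq)

def ellipticIntegrand {N : ℕ} (G : ℝ → ℝ) (p : Euc N → ℝ → ℝ) (φ : Euc N → ℝ)
    (x : Euc N) (s : ℝ) : ℝ :=
  p x s * lap φ x + G (p x s) * φ x

theorem setIntegral_Qset_eq_integral_bump_mul {N : ℕ} {G : ℝ → ℝ} {p : Euc N → ℝ → ℝ}
    {ψ : Euc N → ℝ} {χ : ℝ → ℝ} {t ε : ℝ} (ht : 0 < t) (hχ : IsRightBump χ t ε) :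
    ∫ q in Qset N, (p q.1 q.2 * lap (fun y => ψ y * χ q.2) q.1 + G (p q.1 q.2) * (ψ q.1 * χ q.2))
      = ∫ q : Euc N × ℝ, χ q.2 * ellipticIntegrand G p ψ q.1 q.2 := by
  simp_rw [lap_mul_const]
  rw [setIntegral_Qset_eq_integral fun q hq => by simp [hχ.eq_zero_of_nonpos ht hq]]
  refine integral_congr_ae (ae_of_all _ fun q => ?_)
  simp only [ellipticIntegrand]
  ring

namespace LimitSolution

variable {N : ℕ} {G : ℝ → ℝ} {pM : ℝ} {n0 : Euc N → ℝ} {n p : Euc N → ℝ → ℝ}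
  {gp : Euc N → ℝ → Euc N} {ψ : Euc N → ℝ} {χ : ℝ → ℝ} {t ε : ℝ}

theorem ae_eq_one_of_pos (hsol : LimitSolution N G pM n0 n p gp) :
    ∀ᵐ q : Euc N × ℝ, 0 < q.2 → 0 < p q.1 q.2 → n q.1 q.2 = 1 := by
  filter_upwards [hsol.saturation, hsol.n_range] with q hsat hrange hq hp
  by_contra hne
  exact hp.ne' (hsat hq (lt_of_le_of_ne (hrange hq).2 hne))

theorem continuousWithinAt_Ici (hsol : LimitSolution N G pM n0 n p gp) (ht : 0 ≤ t)
    (x : Euc N) : ContinuousWithinAt (p x) (Ici t) t :=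
  continuousWithinAt_Ioi_iff_Ici.1 (hsol.p_right_cont x t ht)

theorem measurable_ellipticIntegrand (hsol : LimitSolution N G pM n0 n p gp)
    (hG : Continuous G) (hψ : IsTestFun ψ) :
    Measurable (Function.uncurry (ellipticIntegrand G p ψ)) :=
  (hsol.p_meas.mul (hψ.continuous_lap.measurable.comp measurable_fst)).add
    ((hG.measurable.comp hsol.p_meas).mul (hψ.1.continuous.measurable.comp measurable_fst))

theorem exists_integrable_bound (hsol : LimitSolution N G pM n0 n p gp) (hG : Continuous G)
    (hψ : IsTestFun ψ) :
    ∃ g : Euc N → ℝ, Integrable g ∧ ∀ x s, 0 ≤ s → |ellipticIntegrand G p ψ x s| ≤ g x := by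
  obtain ⟨C, hC⟩ := (isCompact_Icc (a := 0) (b := pM)).exists_bound_of_continuousOn hG.continuousOn
  refine ⟨fun x => pM * |lap ψ x| + C * |ψ x|,
    (hψ.integrable_lap.abs.const_mul pM).add (hψ.integrable.abs.const_mul C), fun x s hs => ?_⟩
  obtain ⟨hp0, hpM⟩ := hsol.p_range x s hs
  calc |ellipticIntegrand G p ψ x s| ≤ |p x s| * |lap ψ x| + |G (p x s)| * |ψ x| := by
        rw [← abs_mul, ← abs_mul]; exact abs_add_le _ _
    _ ≤ pM * |lap ψ x| + C * |ψ x| := by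
        gcongr
        · exact abs_le.2 ⟨by linarith, hpM⟩
        · exact hC _ ⟨hp0, hpM⟩

theorem tendsto_integral_bump_mul (hsol : LimitSolution N G pM n0 n p gp) (hG : Continuous G)
    (ht : 0 < t) (hψ : IsTestFun ψ) {χ : ℕ → ℝ → ℝ} {ε : ℕ → ℝ}
    (hε : Tendsto ε atTop (nhds 0)) (hχ : ∀ k, IsRightBump (χ k) t (ε k)) :
    Tendsto (fun k => ∫ q : Euc N × ℝ, χ k q.2 * ellipticIntegrand G p ψ q.1 q.2) atTop
      (nhds (∫ x, ellipticIntegrand G p ψ x t)) := by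
  obtain ⟨g, hg, hbound⟩ := hsol.exists_integrable_bound hG hψ
  exact tendsto_integral_prod_mul_of_isRightBump (hsol.measurable_ellipticIntegrand hG hψ) hg
    (fun x s hs => hbound x s (ht.le.trans hs))
    (fun x => ((hsol.continuousWithinAt_Ici ht.le x).mul continuousWithinAt_const).add
      ((hG.continuousAt.comp_continuousWithinAt (hsol.continuousWithinAt_Ici ht.le x)).mul
        continuousWithinAt_const)) hε hχ

theorem integral_bump_mul_nonneg (hsol : LimitSolution N G pM n0 n p gp) (ht : 0 < t)
    (hψ : IsTestFun ψ) (hψ0 : ∀ x, 0 ≤ ψ x) (hχ : IsRightBump χ t ε) :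
    0 ≤ ∫ q : Euc N × ℝ, χ q.2 * ellipticIntegrand G p ψ q.1 q.2 := by
  have h := hsol.semiconvexity _ (hψ.isTestFunQ_mul hχ.contDiff hχ.hasCompactSupport
    (hχ.tsupport_subset_Ioi ht))
    fun q => mul_nonneg (hψ0 q.1) (hχ.nonneg q.2)
  dsimp only at h
  rwa [setIntegral_Qset_eq_integral_bump_mul ht hχ] at h

theorem integral_bump_mul_eq_zero (hsol : LimitSolution N G pM n0 n p gp) (hG : Continuous G)
    (ht : 0 < t) (hψ : IsTestFun ψ) (hψΩ : tsupport ψ ⊆ Omega p t) (hχ : IsRightBump χ t ε) :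
    ∫ q : Euc N × ℝ, χ q.2 * ellipticIntegrand G p ψ q.1 q.2 = 0 := by
  have h := hsol.pde _ (hψ.isTestFunQ_mul hχ.contDiff hχ.hasCompactSupport
    (hχ.tsupport_subset_Ioi ht))
  dsimp only at h
  have hχd : Differentiable ℝ χ := hχ.contDiff.differentiable (by simp)
  -- on `supp ψ × supp χ` we have `p ≥ p(·, t) > 0`, hence `n = 1`
  have hsat : (fun q : Euc N × ℝ => n q.1 q.2 * deriv (fun s => ψ q.1 * χ s) q.2
      + p q.1 q.2 * lap (fun y => ψ y * χ q.2) q.1 + n q.1 q.2 * G (p q.1 q.2) * (ψ q.1 * χ q.2))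
      =ᵐ[volume] fun q => ψ q.1 * deriv χ q.2 + χ q.2 * ellipticIntegrand G p ψ q.1 q.2 := by
    filter_upwards [hsol.ae_eq_one_of_pos] with q hq
    rw [deriv_const_mul _ (hχd q.2), lap_mul_const]
    by_cases hx : q.1 ∈ tsupport ψ
    · by_cases hs : q.2 ∈ Icc t (t + ε)
      · have hpos : 0 < p q.1 q.2 := (hψΩ hx : 0 < p q.1 t).trans_le
          (hsol.p_mono q.1 (mem_Ici.2 ht.le) (mem_Ici.2 (ht.le.trans hs.1)) hs.1)
        rw [hq (ht.trans_le hs.1) hpos, ellipticIntegrand]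
        ring
      · simp [hχ.eq_zero_of_notMem hs, hχ.deriv_eq_zero_of_notMem hs]
    · simp [ellipticIntegrand, image_eq_zero_of_notMem_tsupport hx,
        lap_eq_zero_of_notMem_tsupport hx]
  obtain ⟨g, hg, hbound⟩ := hsol.exists_integrable_bound hG hψ
  have hint : Integrable fun q : Euc N × ℝ => χ q.2 * ellipticIntegrand G p ψ q.1 q.2 :=
    hχ.integrable_prod_mul (hsol.measurable_ellipticIntegrand hG hψ) hg
      fun x s hs => hbound x s (ht.le.trans hs)
  rw [integral_congr_ae (ae_restrict_of_ae hsat), setIntegral_Qset_eq_integral fun q hq => by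
      simp [hχ.eq_zero_of_nonpos ht hq, hχ.deriv_eq_zero_of_nonpos ht hq],
    Measure.volume_eq_prod, integral_add (hψ.integrable.mul_prod hχ.integrable_deriv) hint, integral_prod_mul,
    hχ.integral_deriv_eq_zero, mul_zero, zero_add] at h
  exact h

end LimitSolution

theorem distributional_elliptic_equation_general {N : ℕ} (G : ℝ → ℝ) (pM : ℝ)
    (hG : GCond G pM) (n0 : Euc N → ℝ) (n p : Euc N → ℝ → ℝ) (gp : Euc N → ℝ → Euc N)
    (hsol : LimitSolution N G pM n0 n p gp) (t : ℝ) (ht : 0 < t) :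
    (∀ φ : Euc N → ℝ, IsTestFun φ → (∀ x, 0 ≤ φ x) →
      0 ≤ ∫ x, (p x t * lap φ x + G (p x t) * φ x)) ∧
    (∀ φ : Euc N → ℝ, IsTestFun φ → tsupport φ ⊆ interior (Omega p t) →
      ∫ x, (p x t * lap φ x + G (p x t) * φ x) = 0) := by
  have hGc : Continuous G := hG.smooth.continuous
  choose χ hχ using fun k : ℕ => exists_isRightBump t (Nat.one_div_pos_of_nat (n := k))
  have hlim := fun φ (hφ : IsTestFun φ) =>
    hsol.tendsto_integral_bump_mul hGc ht hφ tendsto_one_div_add_atTop_nhds_zero_nat hχ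
  refine ⟨fun φ hφ hφ0 => ge_of_tendsto' (hlim φ hφ) fun k =>
      hsol.integral_bump_mul_nonneg ht hφ hφ0 (hχ k),
    fun φ hφ hφΩ => tendsto_nhds_unique (hlim φ hφ) ?_⟩
  simpa only [hsol.integral_bump_mul_eq_zero hGc ht hφ (hφΩ.trans interior_subset) (hχ _)]
    using tendsto_const_nhds

/-- **Corollary 2.3.** For every `t > 0`, `Δp(t) + G(p(t)) ≥ 0` in `D'(ℝ^N)` and
`Δp(t) + G(p(t)) = 0` in `D'(Int Ω(t))`. -/
theorem distributional_elliptic_equation {N : ℕ} (hN : 1 ≤ N) (G : ℝ → ℝ) (pM : ℝ)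
    (hG : GCond G pM) (n0 : Euc N → ℝ) (n p : Euc N → ℝ → ℝ) (gp : Euc N → ℝ → Euc N)
    (hsol : LimitSolution N G pM n0 n p gp) (t : ℝ) (ht : 0 < t) :
    (∀ φ : Euc N → ℝ, IsTestFun φ → (∀ x, 0 ≤ φ x) →
      0 ≤ ∫ x, (p x t * lap φ x + G (p x t) * φ x)) ∧
    (∀ φ : Euc N → ℝ, IsTestFun φ → tsupport φ ⊆ interior (Omega p t) →
      ∫ x, (p x t * lap φ x + G (p x t) * φ x) = 0) :=
  distributional_elliptic_equation_general G pM hG n0 n p gp hsol t ht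
end
end

section
/- Let (n,p) be a limit solution with initial datum n⁰. Then for all but countably many t > 0 (in particular for almost every t > 0) the set Ω(t) ∖ Ω̃(t) has Lebesgue measure zero; since Ω̃(t) ⊆ Ω(t) always holds, for such t the sets Ω(t) and Ω̃(t) coincide up to a Lebesgue-null set. -/
open MeasureTheory Metric Set Filter Real
open scoped ENNReal RealInnerProductSpace

noncomputable section

/-! Since `p(x,·)` is nondecreasing and nonnegative, `w(x,t) > 0` exactly when `p(x,s) > 0` for
some `s < t`. Hence `Ω(s) ⊆ Ω̃(t) ⊆ Ω(t)` whenever `0 ≤ s < t`, so the measurable sets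
`Ω(t) \ Ω̃(t)`, `t > 0`, are pairwise disjoint, and in a σ-finite measure space only countably many
of them can have positive measure. -/

theorem intervalIntegral_mul_pos_of_monotoneOn {f g : ℝ → ℝ} {a b s₀ : ℝ}
    (hf : MonotoneOn f (Icc a b)) (hf_nonneg : ∀ s ∈ Icc a b, 0 ≤ f s)
    (hg : Continuous g) (hg_pos : ∀ s, 0 < g s) (hs₀ : s₀ ∈ Ico a b) (hfs₀ : 0 < f s₀) :
    0 < ∫ s in a..b, g s * f s := by
  have hab : a < b := hs₀.1.trans_lt hs₀.2
  rw [← uIcc_of_le hab.le] at hf hf_nonneg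
  have hint : IntervalIntegrable (fun s => g s * f s) volume a b :=
    hf.intervalIntegrable.continuousOn_mul hg.continuousOn
  have hnonneg : 0 ≤ᵐ[volume.restrict (uIoc a b)] fun s => g s * f s :=
    ae_restrict_of_forall_mem measurableSet_uIoc fun s hs =>
      mul_nonneg (hg_pos s).le (hf_nonneg s (uIoc_subset_uIcc hs))
  have hsupport : Ioc s₀ b ⊆ Function.support (fun s => g s * f s) ∩ Ioc a b := by
    intro s hs
    have hsab : s ∈ uIcc a b := by rw [uIcc_of_le hab.le]; exact ⟨hs₀.1.trans hs.1.le, hs.2⟩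
    have hs₀ab : s₀ ∈ uIcc a b := by rw [uIcc_of_le hab.le]; exact Ico_subset_Icc_self hs₀
    exact ⟨(mul_pos (hg_pos s) (hfs₀.trans_le (hf hs₀ab hsab hs.1.le))).ne',
      hs₀.1.trans_lt hs.1, hs.2⟩
  rw [intervalIntegral.integral_pos_iff_support_of_nonneg_ae' hnonneg hint]
  refine ⟨hab, lt_of_lt_of_le ?_ (measure_mono hsupport)⟩
  simpa using hs₀.2

theorem intervalIntegral_mul_eq_zero_of_monotoneOn {f g : ℝ → ℝ} {a b : ℝ} (hab : a ≤ b)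
    (hf : MonotoneOn f (Icc a b)) (hf_nonneg : ∀ s ∈ Icc a b, 0 ≤ f s) (hfb : f b = 0) :
    ∫ s in a..b, g s * f s = 0 := by
  have hf_zero : EqOn (fun s => g s * f s) (fun _ => 0) (uIcc a b) := by
    intro s hs
    rw [uIcc_of_le hab] at hs
    have : f s = 0 := le_antisymm (hfb ▸ hf hs (right_mem_Icc.2 hab) hs.2) (hf_nonneg s hs)
    simp [this]
  rw [intervalIntegral.integral_congr hf_zero, intervalIntegral.integral_zero]

theorem measurable_intervalIntegral_of_uncurry {α : Type*} [MeasurableSpace α] {f : α → ℝ → ℝ}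
    (hf : Measurable (Function.uncurry f)) (a b : ℝ) :
    Measurable fun x => ∫ s in a..b, f x s :=
  (hf.stronglyMeasurable.integral_prod_right (ν := volume.restrict (Ioc a b))).measurable.sub
    (hf.stronglyMeasurable.integral_prod_right (ν := volume.restrict (Ioc b a))).measurable

theorem countable_setOf_measure_diff_pos {ι α : Type*} [LinearOrder ι] [MeasurableSpace α]
    {μ : Measure α} [SFinite μ] {S : Set ι} {A B : ι → Set α}
    (hA : ∀ t ∈ S, MeasurableSet (A t)) (hB : ∀ t ∈ S, MeasurableSet (B t))
    (hAB : ∀ s ∈ S, ∀ t ∈ S, s < t → A s ⊆ B t) :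
    {t ∈ S | 0 < μ (A t \ B t)}.Countable := by
  have hdisj : Pairwise (Function.onFun Disjoint fun t : S => A t \ B t) :=
    (pairwise_disjoint_on _).2 fun s t hst =>
      disjoint_left.2 fun _ hxs hxt => hxt.2 (hAB s s.2 t t.2 hst hxs.1)
  have hcount := (Measure.countable_meas_pos_of_disjoint_iUnion (μ := μ)
    (fun t : S => (hA t t.2).diff (hB t t.2)) hdisj).image Subtype.val
  refine hcount.mono ?_
  rintro t ⟨htS, ht⟩
  exact ⟨⟨t, htS⟩, ht, rfl⟩

namespace LimitSolution

variable {N : ℕ} {G : ℝ → ℝ} {pM : ℝ} {n0 : Euc N → ℝ} {n p : Euc N → ℝ → ℝ}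
  {gp : Euc N → ℝ → Euc N}

theorem measurableSet_omega (hsol : LimitSolution N G pM n0 n p gp) (t : ℝ) :
    MeasurableSet (Omega p t) :=
  measurableSet_lt measurable_const (hsol.p_meas.comp (measurable_id.prodMk measurable_const))

theorem measurableSet_omegaTilde (hsol : LimitSolution N G pM n0 n p gp) (t : ℝ) :
    MeasurableSet (OmegaTilde G p t) := by
  have hw : Measurable (Function.uncurry fun x s => Real.exp (-(G 0) * s) * p x s) :=
    (Real.measurable_exp.comp (measurable_const.mul measurable_snd)).mul hsol.p_meas
  exact measurableSet_lt measurable_const (measurable_intervalIntegral_of_uncurry hw 0 t)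

theorem omegaTilde_subset_omega (hsol : LimitSolution N G pM n0 n p gp) {t : ℝ} (ht : 0 ≤ t) :
    OmegaTilde G p t ⊆ Omega p t := by
  intro x hx
  by_contra hpx
  have hp0 : p x t = 0 := le_antisymm (not_lt.1 hpx) (hsol.p_range x t ht).1
  have hw0 : wFun G p x t = 0 :=
    intervalIntegral_mul_eq_zero_of_monotoneOn ht ((hsol.p_mono x).mono Icc_subset_Ici_self)
      (fun s hs => (hsol.p_range x s hs.1).1) hp0
  exact hx.ne' hw0

theorem omega_subset_omegaTilde (hsol : LimitSolution N G pM n0 n p gp) {s t : ℝ} (hs : 0 ≤ s)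
    (hst : s < t) : Omega p s ⊆ OmegaTilde G p t := fun x hx =>
  intervalIntegral_mul_pos_of_monotoneOn ((hsol.p_mono x).mono Icc_subset_Ici_self)
    (fun r hr => (hsol.p_range x r hr.1).1) (by fun_prop) (fun r => Real.exp_pos _) ⟨hs, hst⟩ hx

end LimitSolution

theorem Omega_eq_OmegaTilde_ae_general {N : ℕ} (G : ℝ → ℝ) (pM : ℝ)
    (n0 : Euc N → ℝ) (n p : Euc N → ℝ → ℝ) (gp : Euc N → ℝ → Euc N)
    (hsol : LimitSolution N G pM n0 n p gp) :
    (∀ t : ℝ, 0 < t → OmegaTilde G p t ⊆ Omega p t) ∧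
    ∃ C : Set ℝ, C.Countable ∧
      ∀ t : ℝ, 0 < t → t ∉ C → volume (Omega p t \ OmegaTilde G p t) = 0 := by
  refine ⟨fun t ht => hsol.omegaTilde_subset_omega ht.le, _,
    countable_setOf_measure_diff_pos (μ := volume) (S := Ioi 0)
      (fun t _ => hsol.measurableSet_omega t) (fun t _ => hsol.measurableSet_omegaTilde t)
      (fun s hs t _ hst => hsol.omega_subset_omegaTilde hs.le hst),
    fun t ht htC => ?_⟩
  simpa [ht] using htC

/-- **Corollary 2.9.** `Ω̃(t) ⊆ Ω(t)` for all `t > 0`, and for all but countably many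
`t > 0` (in particular for a.e. `t > 0`) the difference `Ω(t) ∖ Ω̃(t)` is Lebesgue null,
so that the two sets coincide up to a null set. -/
theorem Omega_eq_OmegaTilde_ae {N : ℕ} (hN : 1 ≤ N) (G : ℝ → ℝ) (pM : ℝ)
    (hG : GCond G pM) (n0 : Euc N → ℝ) (n p : Euc N → ℝ → ℝ) (gp : Euc N → ℝ → Euc N)
    (hsol : LimitSolution N G pM n0 n p gp) :
    (∀ t : ℝ, 0 < t → OmegaTilde G p t ⊆ Omega p t) ∧
    ∃ C : Set ℝ, C.Countable ∧
      ∀ t : ℝ, 0 < t → t ∉ C → volume (Omega p t \ OmegaTilde G p t) = 0 :=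
  Omega_eq_OmegaTilde_ae_general G pM n0 n p gp hsol
end
end

section
/- Let p : ℝ^N × (0,T) → [0,p_M] be C¹ in t and C² in x, with x ↦ p(x,t) compactly supported for each t ∈ (0,T), solving the equation ∂_t p = γ p Δp + |∇p|² + γ p G(p) pointwise in ℝ^N × (0,T), and satisfying the Aronson–Bénilan-type bound ∂_t p(x,t) ≥ −γ c p(x,t) e^{−γct}/(1 − e^{−γct}) for all (x,t). Then for every t ∈ (0,T): (γ − 1) ∫_{ℝ^N} |∇p(x,t)|² dx ≤ γ (G(0) + c e^{−γct}/(1 − e^{−γct})) ∫_{ℝ^N} p(x,t) dx. -/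
open MeasureTheory Metric Set Filter Real
open scoped ENNReal RealInnerProductSpace

noncomputable section

/-!
At a fixed time, the Aronson–Bénilan bound and the equation give pointwise
`-γ c e^{-γct}/(1-e^{-γct}) p ≤ γ p Δp + |∇p|² + γ p G(p) ≤ γ p Δp + |∇p|² + γ G(0) p`,
the last step because `p ≥ 0` and `G` is decreasing. Integrating over `ℝ^N`, integration by parts
against the compactly supported `p` turns `∫ p Δp` into `-∫ |∇p|²`.
-/

section IntegrationByParts

variable {E : Type*} [NormedAddCommGroup E] [NormedSpace ℝ E] [FiniteDimensional ℝ E]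
  [MeasurableSpace E] [BorelSpace E] {μ : Measure E} [μ.IsAddHaarMeasure]

lemma integral_mul_fderiv_fderiv_self {φ : E → ℝ} (hφ : ContDiff ℝ 2 φ)
    (hs : HasCompactSupport φ) (v : E) :
    ∫ x, φ x * fderiv ℝ (fderiv ℝ φ) x v v ∂μ = -∫ x, fderiv ℝ φ x v ^ 2 ∂μ := by
  have hφ' : ContDiff ℝ 1 (fderiv ℝ φ) := hφ.fderiv_right (by norm_num)
  have hφv : ContDiff ℝ 1 (fderiv ℝ φ · v) := hφ'.clm_apply contDiff_const
  have hφvv (x : E) : fderiv ℝ (fderiv ℝ φ · v) x v = fderiv ℝ (fderiv ℝ φ) x v v := by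
    rw [fderiv_clm_apply (hφ'.differentiable one_ne_zero x) (differentiableAt_const _)]
    simp
  have hcont : Continuous fun x => fderiv ℝ (fderiv ℝ φ · v) x v :=
    (hφv.continuous_fderiv one_ne_zero).clm_apply continuous_const
  simp_rw [← hφvv, sq]
  exact integral_mul_fderiv_eq_neg_fderiv_mul_of_integrable
    ((hφv.continuous.mul hφv.continuous).integrable_of_hasCompactSupport
      (hs.fderiv_apply ℝ v).mul_right)
    ((hφ.continuous.mul hcont).integrable_of_hasCompactSupport hs.mul_right)
    ((hφ.continuous.mul hφv.continuous).integrable_of_hasCompactSupport hs.mul_right)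
    (fun x _ => hφ.differentiable (by norm_num) x)
    (fun x _ => hφv.differentiable one_ne_zero x)

end IntegrationByParts

lemma gradient_apply_single {N : ℕ} (φ : Euc N → ℝ) (x : Euc N) (i : Fin N) :
    gradient φ x i = fderiv ℝ φ x (EuclideanSpace.single i 1) := by
  rw [← inner_gradient_left, EuclideanSpace.inner_single_right]
  simp

lemma norm_gradient_sq_eq_sum {N : ℕ} (φ : Euc N → ℝ) (x : Euc N) :
    ‖gradient φ x‖ ^ 2 = ∑ i : Fin N, fderiv ℝ φ x (EuclideanSpace.single i 1) ^ 2 := by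
  simp only [EuclideanSpace.real_norm_sq_eq, gradient_apply_single]

section Laplacian

variable {N : ℕ} {φ : Euc N → ℝ}

lemma continuous_lap_s11 (hφ : ContDiff ℝ 2 φ) : Continuous (lap φ) :=
  continuous_finsetSum _ fun _ _ =>
    (((hφ.fderiv_right (m := 1) (by norm_num)).continuous_fderiv one_ne_zero).clm_apply
      continuous_const).clm_apply continuous_const

lemma integrable_fderiv_apply_sq (hφ : ContDiff ℝ 2 φ) (hs : HasCompactSupport φ) (v : Euc N) :
    Integrable fun x => fderiv ℝ φ x v ^ 2 := by
  have hcont : Continuous (fderiv ℝ φ · v) :=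
    (hφ.continuous_fderiv two_ne_zero).clm_apply continuous_const
  have hsupp : HasCompactSupport fun x => fderiv ℝ φ x v ^ 2 :=
    (hs.fderiv_apply ℝ v).comp_left (g := fun y : ℝ => y ^ 2) (zero_pow two_ne_zero)
  exact (hcont.pow 2).integrable_of_hasCompactSupport hsupp

lemma integrable_norm_gradient_sq (hφ : ContDiff ℝ 2 φ) (hs : HasCompactSupport φ) :
    Integrable fun x => ‖gradient φ x‖ ^ 2 := by
  simp_rw [norm_gradient_sq_eq_sum]
  exact integrable_finsetSum _ fun i _ => integrable_fderiv_apply_sq hφ hs _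

lemma integral_mul_lap (hφ : ContDiff ℝ 2 φ) (hs : HasCompactSupport φ) :
    ∫ x, φ x * lap φ x = -∫ x, ‖gradient φ x‖ ^ 2 := by
  have hint (i : Fin N) : Integrable fun x =>
      φ x * fderiv ℝ (fderiv ℝ φ) x (EuclideanSpace.single i 1) (EuclideanSpace.single i 1) :=
    ((hφ.continuous.mul (((hφ.fderiv_right (m := 1) (by norm_num)).continuous_fderiv
      one_ne_zero).clm_apply continuous_const |>.clm_apply continuous_const))
      |>.integrable_of_hasCompactSupport hs.mul_right)
  simp_rw [lap, Finset.mul_sum, norm_gradient_sq_eq_sum]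
  rw [integral_finsetSum _ fun i _ => hint i,
    integral_finsetSum _ fun i _ => integrable_fderiv_apply_sq hφ hs _,
    ← Finset.sum_neg_distrib]
  exact Finset.sum_congr rfl fun i _ => integral_mul_fderiv_fderiv_self hφ hs _

lemma sub_one_mul_integral_norm_gradient_sq_le {γ a : ℝ} (hφ : ContDiff ℝ 2 φ)
    (hs : HasCompactSupport φ)
    (h : ∀ x, -(a * φ x) ≤ γ * φ x * lap φ x + ‖gradient φ x‖ ^ 2) :
    (γ - 1) * ∫ x, ‖gradient φ x‖ ^ 2 ≤ a * ∫ x, φ x := by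
  have hφint : Integrable φ := hφ.continuous.integrable_of_hasCompactSupport hs
  have hlapint : Integrable fun x => γ * (φ x * lap φ x) :=
    ((hφ.continuous.mul (continuous_lap_s11 hφ)).integrable_of_hasCompactSupport
      hs.mul_right).const_mul γ
  have hgradint := integrable_norm_gradient_sq hφ hs
  have key : ∫ x, -(a * φ x) ≤ ∫ x, (γ * (φ x * lap φ x) + ‖gradient φ x‖ ^ 2) :=
    integral_mono (hφint.const_mul a).neg (hlapint.add hgradint) fun x => by
      simpa only [mul_assoc] using h x
  rw [integral_neg, integral_const_mul, integral_add hlapint hgradint, integral_const_mul,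
    integral_mul_lap hφ hs] at key
  linarith

end Laplacian

theorem H1_estimate_general {N : ℕ} (γ c pM T : ℝ)
    (hγ : 1 < γ)
    (G : ℝ → ℝ) (hGanti : StrictAntiOn G (Set.Ici 0))
    (p : Euc N → ℝ → ℝ)
    (hx2 : ∀ t ∈ Set.Ioo (0:ℝ) T, ContDiff ℝ 2 fun x => p x t)
    (hrange : ∀ (x : Euc N), ∀ t ∈ Set.Ioo (0:ℝ) T, p x t ∈ Set.Icc 0 pM)
    (hsupp : ∀ t ∈ Set.Ioo (0:ℝ) T, HasCompactSupport fun x => p x t)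
    (hpde : ∀ (x : Euc N), ∀ t ∈ Set.Ioo (0:ℝ) T,
      deriv (p x) t = γ * p x t * lap (fun y => p y t) x
        + ‖gradient (fun y => p y t) x‖ ^ 2 + γ * p x t * G (p x t))
    (hAB : ∀ (x : Euc N), ∀ t ∈ Set.Ioo (0:ℝ) T,
      -(γ * c * p x t * Real.exp (-(γ * c * t)) / (1 - Real.exp (-(γ * c * t))))
        ≤ deriv (p x) t) :
    ∀ t ∈ Set.Ioo (0:ℝ) T,
      (γ - 1) * ∫ x, ‖gradient (fun y => p y t) x‖ ^ 2
        ≤ γ * (G 0 + c * Real.exp (-(γ * c * t)) / (1 - Real.exp (-(γ * c * t))))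
          * ∫ x, p x t := by
  intro t ht
  refine sub_one_mul_integral_norm_gradient_sq_le (hx2 t ht) (hsupp t ht) fun x => ?_
  have hp : 0 ≤ p x t := (hrange x t ht).1
  have hG : γ * p x t * G (p x t) ≤ γ * p x t * G 0 :=
    mul_le_mul_of_nonneg_left (hGanti.antitoneOn self_mem_Ici hp hp)
      (mul_nonneg (zero_le_one.trans hγ.le) hp)
  have hdt := hAB x t ht
  rw [hpde x t ht] at hdt
  have hsplit : γ * (G 0 + c * rexp (-(γ * c * t)) / (1 - rexp (-(γ * c * t)))) * p x t
      = γ * c * p x t * rexp (-(γ * c * t)) / (1 - rexp (-(γ * c * t))) + γ * p x t * G 0 := by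
    ring
  linarith

/-- **Estimate (3.6) of Lemma 3.2.** For a classical, compactly supported solution of
`∂ₜ p = γ p Δp + |∇p|² + γ p G(p)` on `(0,T)` satisfying the Aronson–Bénilan type bound,
one has `(γ-1) ∫ |∇p(t)|² ≤ γ (G(0) + c e^{-γct}/(1-e^{-γct})) ∫ p(t)` for `t ∈ (0,T)`. -/
theorem H1_estimate {N : ℕ} (hN : 1 ≤ N) (γ c pM T : ℝ)
    (hγ : 1 < γ) (hc : 0 < c) (hpM : 0 < pM) (hT : 0 < T)
    (G : ℝ → ℝ) (hGsmooth : ContDiff ℝ 1 G) (hGanti : StrictAntiOn G (Set.Ici 0))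
    (hGpM : G pM = 0)
    (p : Euc N → ℝ → ℝ)
    (hx2 : ∀ t ∈ Set.Ioo (0:ℝ) T, ContDiff ℝ 2 fun x => p x t)
    (ht1 : ∀ x : Euc N, ContDiffOn ℝ 1 (p x) (Set.Ioo 0 T))
    (hrange : ∀ (x : Euc N), ∀ t ∈ Set.Ioo (0:ℝ) T, p x t ∈ Set.Icc 0 pM)
    (hsupp : ∀ t ∈ Set.Ioo (0:ℝ) T, HasCompactSupport fun x => p x t)
    (hpde : ∀ (x : Euc N), ∀ t ∈ Set.Ioo (0:ℝ) T,
      deriv (p x) t = γ * p x t * lap (fun y => p y t) x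
        + ‖gradient (fun y => p y t) x‖ ^ 2 + γ * p x t * G (p x t))
    (hAB : ∀ (x : Euc N), ∀ t ∈ Set.Ioo (0:ℝ) T,
      -(γ * c * p x t * Real.exp (-(γ * c * t)) / (1 - Real.exp (-(γ * c * t))))
        ≤ deriv (p x) t) :
    ∀ t ∈ Set.Ioo (0:ℝ) T,
      (γ - 1) * ∫ x, ‖gradient (fun y => p y t) x‖ ^ 2
        ≤ γ * (G 0 + c * Real.exp (-(γ * c * t)) / (1 - Real.exp (-(γ * c * t))))
          * ∫ x, p x t :=
  H1_estimate_general γ c pM T hγ G hGanti p hx2 hrange hsupp hpde hAB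
end
end

section
/- Let γ > 0, G₀ > 0, C > 0, r₀ > 0, and define P(x,t) = max(C − (|x| − r₀)²/(4t), 0) for x ∈ ℝ^N, t > 0. Set T* = min{1/(4G₀), r₀²/(16N²C)}. Then: (i) for every t ∈ (0,T*] and every x with r₀ − 2√(Ct) < |x| < r₀, P is C² in a neighborhood of (x,t) and satisfies the supersolution inequality ∂_t P(x,t) ≥ γ P(x,t) ΔP(x,t) + |∇P(x,t)|² + γ P(x,t) G₀ (indeed ∂_t P = |∇P|² and ΔP(x,t) + G₀ ≤ 0 at such points); (ii) P(x,t) = 0 whenever 0 < t ≤ T* and |x| ≤ r₀(2N−1)/(2N). -/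
/-!
On its positivity set `P` coincides with the smooth radial profile
`F(x,t) = C - (|x| - r₀)²/(4t)`, for which `∂ₜF = (|x| - r₀)²/(4t²) = |∇F|²` and, by the
formula `Δ(g ∘ |·|) = g'' + (N - 1) g'/|x|`, `ΔF = (N(r₀ - |x|) - r₀)/(2t|x|)`. Up to time `T*`
we have `2√(Ct) ≤ r₀/(2N)`, so on the annulus `N(r₀ - |x|) ≤ r₀/2 ≤ r₀ - |x|/2`, whence
`ΔF ≤ -1/(4t) ≤ -G₀` and the supersolution inequality reduces to `γP(ΔP + G₀) ≤ 0`. On the ball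
`|x| ≤ r₀ - r₀/(2N)` instead `(|x| - r₀)² ≥ r₀²/(4N²) ≥ 4Ct`, so `P` vanishes.
-/

open MeasureTheory Metric Set Filter Real
open scoped ENNReal RealInnerProductSpace

noncomputable section

/-- The barrier `P(x,t) = (C - (|x|-r₀)²/(4t))₊`. -/
def Pfun {N : ℕ} (C r₀ : ℝ) (x : Euc N) (t : ℝ) : ℝ :=
  max (C - (‖x‖ - r₀) ^ 2 / (4 * t)) 0

open scoped Topology

section Radial

variable {E : Type*} [NormedAddCommGroup E] [InnerProductSpace ℝ E] {x : E}

theorem hasFDerivAt_norm_of_ne_zero (hx : x ≠ 0) :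
    HasFDerivAt (fun y : E => ‖y‖) (‖x‖⁻¹ • innerSL ℝ x) x := by
  have hsq : HasFDerivAt (fun y : E => √(‖y‖ ^ 2)) ((1 / (2 * √(‖x‖ ^ 2))) • 2 • innerSL ℝ x) x :=
    (Real.hasDerivAt_sqrt (by positivity)).comp_hasFDerivAt x
      (hasStrictFDerivAt_norm_sq x).hasFDerivAt
  simp only [Real.sqrt_sq (norm_nonneg _)] at hsq
  convert hsq using 1
  ext v
  simp only [smul_apply, coe_innerSL_apply, smul_eq_mul, nsmul_eq_mul, Nat.cast_ofNat]
  field_simp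

theorem HasDerivAt.hasFDerivAt_comp_norm {g : ℝ → ℝ} {g' : ℝ} (hg : HasDerivAt g g' ‖x‖)
    (hx : x ≠ 0) : HasFDerivAt (fun y : E => g ‖y‖) ((g' / ‖x‖) • innerSL ℝ x) x := by
  have h := hg.comp_hasFDerivAt x (hasFDerivAt_norm_of_ne_zero hx)
  rwa [smul_smul, ← div_eq_mul_inv] at h

theorem HasDerivAt.hasGradientAt_comp_norm [CompleteSpace E] {g : ℝ → ℝ} {g' : ℝ}
    (hg : HasDerivAt g g' ‖x‖) (hx : x ≠ 0) :
    HasGradientAt (fun y : E => g ‖y‖) ((g' / ‖x‖) • x) x := by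
  convert (hg.hasFDerivAt_comp_norm hx).hasGradientAt
  rw [map_smul]
  exact congrArg _ ((InnerProductSpace.toDual ℝ E).symm_apply_apply x).symm

end Radial

section Laplacian

variable {N : ℕ}

theorem lap_congr {f g : Euc N → ℝ} {x : Euc N} (h : f =ᶠ[𝓝 x] g) : lap f x = lap g x := by
  simp only [lap, h.fderiv.fderiv_eq]

theorem lap_eq_of_hasFDerivAt_fderiv {f : Euc N → ℝ} {x : Euc N} {D : Euc N →L[ℝ] Euc N →L[ℝ] ℝ}
    {a b : ℝ} (hf : HasFDerivAt (fderiv ℝ f) D x) (hD : ∀ v, D v v = a * ‖v‖ ^ 2 + b * ⟪x, v⟫ ^ 2) :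
    lap f x = N * a + b * ‖x‖ ^ 2 := by
  simp [lap, hf.fderiv, hD, EuclideanSpace.real_norm_sq_eq, EuclideanSpace.inner_single_right,
    Finset.mul_sum, Finset.sum_add_distrib]

theorem lap_comp_norm {g g' : ℝ → ℝ} {g'' : ℝ} {x : Euc N} (hx : x ≠ 0)
    (hg : ∀ᶠ s in 𝓝 ‖x‖, HasDerivAt g (g' s) s) (hg' : HasDerivAt g' g'' ‖x‖) :
    lap (fun y => g ‖y‖) x = g'' + (N - 1) * g' ‖x‖ / ‖x‖ := by
  have hρ : ‖x‖ ≠ 0 := norm_ne_zero_iff.2 hx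
  have hfderiv : fderiv ℝ (fun y : Euc N => g ‖y‖) =ᶠ[𝓝 x]
      fun y => (g' ‖y‖ / ‖y‖) • innerSL ℝ y := by
    filter_upwards [continuous_norm.continuousAt.eventually hg, eventually_ne_nhds hx]
      with y hy hy0
    exact (hy.hasFDerivAt_comp_norm hy0).fderiv
  have hcoef : HasDerivAt (fun s => g' s / s) ((g'' * ‖x‖ - g' ‖x‖) / ‖x‖ ^ 2) ‖x‖ := by
    have h := hg'.div (hasDerivAt_id' _) hρ
    rwa [mul_one] at h
  have hD := (hcoef.hasFDerivAt_comp_norm hx).fun_smul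
    ((innerSL ℝ (E := Euc N)).hasFDerivAt (x := x))
  refine (lap_eq_of_hasFDerivAt_fderiv (a := g' ‖x‖ / ‖x‖)
    (b := (g'' * ‖x‖ - g' ‖x‖) / ‖x‖ ^ 2 / ‖x‖) (hD.congr_of_eventuallyEq hfderiv)
    fun v => ?_).trans ?_
  · simp only [add_apply, smul_apply, ContinuousLinearMap.smulRight_apply, coe_innerSL_apply,
      smul_eq_mul]
    erw [innerSL_apply_apply]
    rw [innerSL_apply_apply, real_inner_self_eq_norm_sq]
    ring
  · field_simp
    ring

end Laplacian

section Arithmetic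

variable {n C r₀ t : ℝ}

theorem two_sqrt_mul_le_of_le_div (hn : 0 < n) (hC : 0 < C) (hr : 0 ≤ r₀) (ht : 0 ≤ t)
    (htT : t ≤ r₀ ^ 2 / (16 * n ^ 2 * C)) : 2 * √(C * t) ≤ r₀ / (2 * n) := by
  rw [le_div_iff₀ (by positivity)] at htT
  refine (pow_le_pow_iff_left₀ (by positivity) (by positivity) two_ne_zero).1 ?_
  rw [mul_pow, Real.sq_sqrt (by positivity), div_pow, le_div_iff₀ (by positivity)]
  linarith

theorem sq_sub_div_lt_of_sub_lt (hC : 0 ≤ C) (ht : 0 < t) {ρ : ℝ} (hρ : ρ < r₀)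
    (hρ' : r₀ - 2 * √(C * t) < ρ) : (ρ - r₀) ^ 2 / (4 * t) < C := by
  rw [div_lt_iff₀ (by positivity)]
  have hsq : (r₀ - ρ) ^ 2 < (2 * √(C * t)) ^ 2 := by gcongr; linarith
  rw [mul_pow, Real.sq_sqrt (by positivity)] at hsq
  linarith

end Arithmetic

section Barrier

variable {N : ℕ} {C r₀ t : ℝ} {x : Euc N}

theorem Pfun_nonneg (C r₀ : ℝ) (x : Euc N) (t : ℝ) : 0 ≤ Pfun C r₀ x t := le_max_right _ _

theorem Pfun_eq_zero_of_le (h : C ≤ (‖x‖ - r₀) ^ 2 / (4 * t)) : Pfun C r₀ x t = 0 :=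
  max_eq_right (sub_nonpos.2 h)

theorem Pfun_eq_zero_of_two_sqrt_le (hC : 0 ≤ C) (ht : 0 < t) (h : 2 * √(C * t) ≤ r₀ - ‖x‖) :
    Pfun C r₀ x t = 0 := by
  refine Pfun_eq_zero_of_le ((le_div_iff₀ (by positivity)).2 ?_)
  have hsq := pow_le_pow_left₀ (by positivity) h 2
  rw [mul_pow, Real.sq_sqrt (by positivity)] at hsq
  linarith [neg_sub r₀ ‖x‖, neg_sq (r₀ - ‖x‖)]

theorem contDiffAt_barrier {n : WithTop ℕ∞} (hx : x ≠ 0) (ht : t ≠ 0) :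
    ContDiffAt ℝ n (fun q : Euc N × ℝ => C - (‖q.1‖ - r₀) ^ 2 / (4 * q.2)) (x, t) := by
  have hnorm : ContDiffAt ℝ n (fun q : Euc N × ℝ => ‖q.1‖) (x, t) :=
    (contDiffAt_norm ℝ hx).comp (x, t) contDiffAt_fst
  exact contDiffAt_const.sub (((hnorm.sub contDiffAt_const).pow 2).div
    (contDiffAt_const.mul contDiffAt_snd) (mul_ne_zero four_ne_zero ht))

theorem Pfun_eventuallyEq (hx : x ≠ 0) (ht : t ≠ 0) (hP : (‖x‖ - r₀) ^ 2 / (4 * t) < C) :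
    (fun q : Euc N × ℝ => Pfun C r₀ q.1 q.2) =ᶠ[𝓝 (x, t)]
      fun q => C - (‖q.1‖ - r₀) ^ 2 / (4 * q.2) := by
  filter_upwards [continuousAt_const.eventually_lt
    (contDiffAt_barrier (n := 0) hx ht).continuousAt (sub_pos.2 hP)] with q hq
  exact max_eq_left hq.le

theorem Pfun_eventuallyEq_time_slice (hx : x ≠ 0) (ht : t ≠ 0)
    (hP : (‖x‖ - r₀) ^ 2 / (4 * t) < C) :
    (fun y => Pfun C r₀ y t) =ᶠ[𝓝 x] fun y => C - (‖y‖ - r₀) ^ 2 / (4 * t) :=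
  (Continuous.prodMk_left t |>.tendsto x).eventually (Pfun_eventuallyEq hx ht hP)

theorem hasDerivAt_barrierProfile (s : ℝ) :
    HasDerivAt (fun s => C - (s - r₀) ^ 2 / (4 * t)) (-(s - r₀) / (2 * t)) s := by
  refine ((((hasDerivAt_id' s).sub_const r₀).pow 2).div_const (4 * t)).const_sub C
    |>.congr_deriv ?_
  ring

theorem hasDerivAt_Pfun_time (hx : x ≠ 0) (ht : t ≠ 0) (hP : (‖x‖ - r₀) ^ 2 / (4 * t) < C) :
    HasDerivAt (fun s => Pfun C r₀ x s) ((‖x‖ - r₀) ^ 2 / (4 * t ^ 2)) t := by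
  refine HasDerivAt.congr_of_eventuallyEq ?_
    ((Continuous.prodMk_right x |>.tendsto t).eventually (Pfun_eventuallyEq hx ht hP))
  refine (((hasDerivAt_id' t).const_mul 4).inv (mul_ne_zero four_ne_zero ht)
    |>.const_mul ((‖x‖ - r₀) ^ 2) |>.const_sub C).congr_deriv ?_
  field_simp

theorem hasGradientAt_Pfun (hx : x ≠ 0) (ht : t ≠ 0) (hP : (‖x‖ - r₀) ^ 2 / (4 * t) < C) :
    HasGradientAt (fun y => Pfun C r₀ y t) ((-(‖x‖ - r₀) / (2 * t) / ‖x‖) • x) x :=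
  ((hasDerivAt_barrierProfile ‖x‖).hasGradientAt_comp_norm hx).congr_of_eventuallyEq
    (Pfun_eventuallyEq_time_slice hx ht hP)

theorem norm_gradient_Pfun_sq (hx : x ≠ 0) (ht : t ≠ 0) (hP : (‖x‖ - r₀) ^ 2 / (4 * t) < C) :
    ‖gradient (fun y => Pfun C r₀ y t) x‖ ^ 2 = (‖x‖ - r₀) ^ 2 / (4 * t ^ 2) := by
  have hρ : ‖x‖ ≠ 0 := norm_ne_zero_iff.2 hx
  rw [(hasGradientAt_Pfun hx ht hP).gradient, norm_smul, mul_pow, Real.norm_eq_abs, sq_abs]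
  field_simp
  ring

theorem lap_Pfun (hx : x ≠ 0) (ht : t ≠ 0) (hP : (‖x‖ - r₀) ^ 2 / (4 * t) < C) :
    lap (fun y => Pfun C r₀ y t) x = -1 / (2 * t) + (N - 1) * (-(‖x‖ - r₀) / (2 * t)) / ‖x‖ := by
  rw [lap_congr (Pfun_eventuallyEq_time_slice hx ht hP)]
  refine lap_comp_norm hx (.of_forall hasDerivAt_barrierProfile) ?_
  refine (((hasDerivAt_id' _).sub_const r₀).neg.div_const (2 * t)).congr_deriv ?_
  ring

theorem lap_Pfun_le (hx : x ≠ 0) (ht : 0 < t) (hP : (‖x‖ - r₀) ^ 2 / (4 * t) < C) (hN : 0 < N)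
    (hgap : r₀ - ‖x‖ ≤ r₀ / (2 * N)) (hxr : ‖x‖ < r₀) :
    lap (fun y => Pfun C r₀ y t) x ≤ -(1 / (4 * t)) := by
  have hρ : 0 < ‖x‖ := norm_pos_iff.2 hx
  have hNρ : N * (r₀ - ‖x‖) ≤ r₀ / 2 := by
    rw [← le_div_iff₀' (by positivity), div_div]
    exact hgap
  rw [lap_Pfun hx ht.ne' hP, show -1 / (2 * t) + (N - 1) * (-(‖x‖ - r₀) / (2 * t)) / ‖x‖
    = -(1 / (4 * t)) + (N * (r₀ - ‖x‖) - (r₀ - ‖x‖ / 2)) / (2 * t * ‖x‖) by field_simp; ring]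
  exact add_le_of_nonpos_right (div_nonpos_of_nonpos_of_nonneg (by linarith) (by positivity))

end Barrier

/-- **Lemma 7.4.** The function `P(x,t) = (C - (|x|-r₀)²/(4t))₊` is a supersolution of
`∂ₜ p = γ p Δp + |∇p|² + γ p G₀` on the annulus `r₀ - 2√(Ct) < |x| < r₀` up to time
`T* = min(1/(4G₀), r₀²/(16N²C))` (indeed there `∂ₜP = |∇P|²` and `ΔP + G₀ ≤ 0`), and
`P(·,t)` vanishes on the ball of radius `r₀(2N-1)/(2N)` for `0 < t ≤ T*`. -/
theorem barrier_supersolution {N : ℕ} (hN : 1 ≤ N) (γ G0 C r₀ : ℝ)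
    (hγ : 0 < γ) (hG0 : 0 < G0) (hC : 0 < C) (hr : 0 < r₀) :
    (∀ t : ℝ, 0 < t → t ≤ min (1 / (4 * G0)) (r₀ ^ 2 / (16 * (N:ℝ) ^ 2 * C)) →
      ∀ x : Euc N, r₀ - 2 * Real.sqrt (C * t) < ‖x‖ → ‖x‖ < r₀ →
        ContDiffAt ℝ 2 (fun q : Euc N × ℝ => Pfun C r₀ q.1 q.2) (x, t) ∧
        deriv (fun s => Pfun C r₀ x s) t = ‖gradient (fun y => Pfun C r₀ y t) x‖ ^ 2 ∧
        lap (fun y => Pfun C r₀ y t) x + G0 ≤ 0 ∧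
        γ * Pfun C r₀ x t * lap (fun y => Pfun C r₀ y t) x
            + ‖gradient (fun y => Pfun C r₀ y t) x‖ ^ 2 + γ * Pfun C r₀ x t * G0
          ≤ deriv (fun s => Pfun C r₀ x s) t) ∧
    (∀ t : ℝ, 0 < t → t ≤ min (1 / (4 * G0)) (r₀ ^ 2 / (16 * (N:ℝ) ^ 2 * C)) →
      ∀ x : Euc N, ‖x‖ ≤ r₀ * (2 * (N:ℝ) - 1) / (2 * (N:ℝ)) → Pfun C r₀ x t = 0) := by
  have hN' : (1 : ℝ) ≤ N := by exact_mod_cast hN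
  have hδ : ∀ t, 0 < t → t ≤ min (1 / (4 * G0)) (r₀ ^ 2 / (16 * (N:ℝ) ^ 2 * C)) →
      2 * √(C * t) ≤ r₀ / (2 * N) := fun t ht htT =>
    two_sqrt_mul_le_of_le_div (by linarith) hC hr.le ht.le (htT.trans (min_le_right _ _))
  have hδr : r₀ / (2 * N) ≤ r₀ / 2 := div_le_div_of_nonneg_left hr.le two_pos (by linarith)
  refine ⟨fun t ht htT x hx₁ hx₂ => ?_, fun t ht htT x hx => ?_⟩
  · have hδt := hδ t ht htT
    have hx : x ≠ 0 := norm_pos_iff.1 (by linarith)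
    have hP := sq_sub_div_lt_of_sub_lt hC.le ht hx₂ hx₁
    have hG0t : G0 ≤ 1 / (4 * t) := by
      have := (le_div_iff₀ (by positivity)).1 (htT.trans (min_le_left _ _))
      rw [le_div_iff₀ (by positivity)]
      linarith
    have hΔ : lap (fun y => Pfun C r₀ y t) x + G0 ≤ 0 := by
      linarith [lap_Pfun_le hx ht hP hN (by linarith) hx₂]
    have hdt : deriv (fun s => Pfun C r₀ x s) t = ‖gradient (fun y => Pfun C r₀ y t) x‖ ^ 2 := by
      rw [(hasDerivAt_Pfun_time hx ht.ne' hP).deriv, norm_gradient_Pfun_sq hx ht.ne' hP]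
    refine ⟨(contDiffAt_barrier hx ht.ne').congr_of_eventuallyEq (Pfun_eventuallyEq hx ht.ne' hP),
      hdt, hΔ, ?_⟩
    rw [hdt]
    linarith [mul_nonpos_of_nonneg_of_nonpos (mul_nonneg hγ.le (Pfun_nonneg C r₀ x t)) hΔ]
  · rw [show r₀ * (2 * (N:ℝ) - 1) / (2 * N) = r₀ - r₀ / (2 * N) by field_simp] at hx
    exact Pfun_eq_zero_of_two_sqrt_le hC.le ht ((hδ t ht htT).trans (by linarith))
end
end

section
/- Let p : ℝ^N → [0,∞) have the reflection property with respect to B_R(0). Then for every x ∈ ℝ^N and every v ∈ ℝ^N ∖ {0} with ⟨x,v⟩ > R|v| (equivalently, ⟨y − x, v⟩ < 0 for every y in the closed ball B̄_R(0)), one has p(x + v) ≤ p(x). In particular: if p(x₀) = 0 for some x₀, then p vanishes identically on the open cone {x₀ + v : v ≠ 0, ⟨x₀,v⟩ > R|v|}; and for every x with |x| > R, the map α ↦ p((1+α)x) is nonincreasing on [0,∞). -/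
open MeasureTheory Metric Set Filter Real
open scoped ENNReal RealInnerProductSpace

noncomputable section

/-- `p` has the Alexandroff reflection property with respect to `B_R(0)`: its values do
not increase under reflection across any hyperplane `{⟪u,·⟫ = a}` (with `‖u‖ = 1`,
`a > R`) disjoint from the closed ball `B̄_R(0)`, going from the half-space containing
the ball to the other one. -/
def ReflectionProperty {N : ℕ} (R : ℝ) (p : Euc N → ℝ) : Prop :=
  ∀ (u : Euc N) (a : ℝ), ‖u‖ = 1 → R < a →
    ∀ x : Euc N, ⟪u, x⟫ < a → p (x + (2 * (a - ⟪u, x⟫)) • u) ≤ p x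

/-- **Consequences of Alexandroff reflection (Lemma 6.1 / proof of Theorem 6.3).**
If `p` has the reflection property with respect to `B_R(0)`, then `p(x+v) ≤ p(x)`
whenever `⟪x,v⟫ > R‖v‖`; in particular, `p` vanishes on the cone
`{x₀ + v : ⟪x₀,v⟫ > R‖v‖}` whenever `p(x₀) = 0`, and `p` is radially nonincreasing
outside `B_R(0)`. -/
theorem reflection_cone_monotonicity {N : ℕ} (R : ℝ) (hR : 0 < R)
    (p : Euc N → ℝ) (hp : ∀ x, 0 ≤ p x) (href : ReflectionProperty R p) :
    (∀ x v : Euc N, v ≠ 0 → R * ‖v‖ < ⟪x, v⟫ → p (x + v) ≤ p x) ∧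
    (∀ x₀ : Euc N, p x₀ = 0 → ∀ v : Euc N, v ≠ 0 → R * ‖v‖ < ⟪x₀, v⟫ → p (x₀ + v) = 0) ∧
    (∀ x : Euc N, R < ‖x‖ → AntitoneOn (fun α : ℝ => p ((1 + α) • x)) (Set.Ici 0)) := by
  have main : ∀ x v : Euc N, v ≠ 0 → R * ‖v‖ < ⟪x, v⟫ → p (x + v) ≤ p x := by
    intro x v hv hxv
    have hvn : (0 : ℝ) < ‖v‖ := norm_pos_iff.mpr hv
    set u : Euc N := ‖v‖⁻¹ • v with hu
    have hun : ‖u‖ = 1 := by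
      rw [hu, norm_smul, norm_inv, norm_norm, inv_mul_cancel₀ hvn.ne']
    have hux : ⟪u, x⟫ = ‖v‖⁻¹ * ⟪x, v⟫ := by
      rw [hu, real_inner_smul_left, real_inner_comm]
    have hRux : R < ⟪u, x⟫ := by
      rw [hux, ← div_eq_inv_mul, lt_div_iff₀ hvn]
      linarith
    set a : ℝ := ⟪u, x⟫ + ‖v‖ / 2 with ha
    have hRa : R < a := by have := hvn; simp only [ha]; linarith
    have hxa : ⟪u, x⟫ < a := by simp only [ha]; linarith
    have key := href u a hun hRa x hxa
    have h2 : 2 * (a - ⟪u, x⟫) = ‖v‖ := by rw [ha]; ring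
    have hrw : (2 * (a - ⟪u, x⟫)) • u = v := by
      rw [h2, hu, smul_smul, mul_inv_cancel₀ hvn.ne', one_smul]
    rwa [hrw] at key
  refine ⟨main, ?_, ?_⟩
  · intro x₀ h0 v hv hxv
    exact le_antisymm (h0 ▸ main x₀ v hv hxv) (hp _)
  · intro x hx α hα β hβ hab
    simp only [Set.mem_Ici] at hα hβ
    rcases eq_or_lt_of_le hab with rfl | hlt
    · exact le_refl _
    have hxne : x ≠ 0 := by
      intro h; rw [h, norm_zero] at hx; linarith
    have hxn : (0 : ℝ) < ‖x‖ := norm_pos_iff.mpr hxne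
    set v : Euc N := (β - α) • x with hv
    have hvne : v ≠ 0 := smul_ne_zero (by linarith) hxne
    have hvnorm : ‖v‖ = (β - α) * ‖x‖ := by
      rw [hv, norm_smul, Real.norm_eq_abs, abs_of_pos (by linarith)]
    have hinner : ⟪(1 + α) • x, v⟫ = (1 + α) * ((β - α) * ⟪x, x⟫) := by
      rw [hv, real_inner_smul_left, real_inner_smul_right]
    have hcond : R * ‖v‖ < ⟪(1 + α) • x, v⟫ := by
      rw [hvnorm, hinner, real_inner_self_eq_norm_sq]
      have h1 : R < (1 + α) * ‖x‖ := by nlinarith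
      nlinarith [mul_lt_mul_of_pos_right h1 (mul_pos (sub_pos.mpr hlt) hxn)]
    have := main ((1 + α) • x) v hvne hcond
    have heq : (1 + α) • x + v = (1 + β) • x := by
      rw [hv, ← add_smul]; ring_nf
    rwa [heq] at this
end
end

section
/- Let p : ℝ^N → [0,∞) have the reflection property with respect to B_R(0). Then p(z) ≥ p(x) whenever |z| < |x| − 2R. Consequently: if p(x) > 0 for some x with |x| > 2R, then p > 0 on the open ball B_{|x|−2R}(0); and, setting Ω = {p > 0}, R₊ = sup{|x| : x ∈ Ω} and R₋ = sup{r ≥ 0 : B_r(0) ⊆ Ω}, one has R₊ − R₋ ≤ 2R whenever Ω is nonempty and bounded. -/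
open MeasureTheory Metric Set Filter Real
open scoped ENNReal RealInnerProductSpace

noncomputable section

/-- **Corollary 6.4.** If `p` has the reflection property with respect to `B_R(0)`,
then `p(z) ≥ p(x)` whenever `|z| < |x| - 2R`; hence the positivity set `Ω = {p > 0}`
contains the ball `B_{|x|-2R}(0)` whenever it contains a point `x`, and
`R₊ - R₋ ≤ 2R` where `R₊ = sup{|x| : x ∈ Ω}` and `R₋ = sup{r : B_r(0) ⊆ Ω}`. -/
theorem reflection_radii_estimate {N : ℕ} (R : ℝ) (hR : 0 < R)
    (p : Euc N → ℝ) (hp : ∀ x, 0 ≤ p x) (href : ReflectionProperty R p) :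
    (∀ x z : Euc N, ‖z‖ < ‖x‖ - 2 * R → p x ≤ p z) ∧
    (∀ x : Euc N, 0 < p x → ∀ z ∈ ball (0 : Euc N) (‖x‖ - 2 * R), 0 < p z) ∧
    ({x : Euc N | 0 < p x}.Nonempty → Bornology.IsBounded {x : Euc N | 0 < p x} →
      sSup (norm '' {x : Euc N | 0 < p x})
          - sSup {r : ℝ | 0 ≤ r ∧ ball (0 : Euc N) r ⊆ {x : Euc N | 0 < p x}}
        ≤ 2 * R) := by

  have key : ∀ x z : Euc N, ‖z‖ < ‖x‖ - 2 * R → p x ≤ p z := by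
    intro x z hzx
    have hnz : (0:ℝ) ≤ ‖z‖ := norm_nonneg z
    have hxz : x ≠ z := by
      intro h; rw [h] at hzx; linarith
    have hd : (0:ℝ) < ‖x - z‖ := by
      rw [norm_pos_iff]; exact sub_ne_zero.mpr hxz
    set d : ℝ := ‖x - z‖ with hd_def
    set u : Euc N := d⁻¹ • (x - z) with hu_def
    have hu : ‖u‖ = 1 := by
      rw [hu_def, norm_smul, norm_inv, Real.norm_eq_abs, abs_of_pos hd, ← hd_def]
      field_simp
    have hinner : ⟪u, z⟫ = d⁻¹ * ⟪x - z, z⟫ := by rw [hu_def]; exact real_inner_smul_left _ _ _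
    set a : ℝ := ⟪u, z⟫ + d / 2 with ha_def
    have h2 : ⟪x - z, z⟫ = ⟪x, z⟫ - ‖z‖^2 := by
      rw [inner_sub_left, real_inner_self_eq_norm_sq]
    have h3 : d^2 = ‖x‖^2 - 2*⟪x, z⟫ + ‖z‖^2 := by
      rw [hd_def, ← real_inner_self_eq_norm_sq, inner_sub_left, inner_sub_right,
        inner_sub_right, real_inner_self_eq_norm_sq, real_inner_self_eq_norm_sq,
        real_inner_comm z x]
      ring
    have ha2 : 2 * d * a = ‖x‖^2 - ‖z‖^2 := by
      have h5 : 2 * d * a = 2 * (d * d⁻¹) * (⟪x, z⟫ - ‖z‖^2) + d * d := by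
        rw [ha_def, hinner, h2]; ring
      rw [mul_inv_cancel₀ (ne_of_gt hd)] at h5
      nlinarith [h3]
    have hRa : R < a := by
      have h1 : d ≤ ‖x‖ + ‖z‖ := norm_sub_le x z
      nlinarith [ha2, hd, hnz]
    have hlt : ⟪u, z⟫ < a := by rw [ha_def]; linarith
    have hrefl := href u a hu hRa z hlt
    have hpt : z + (2 * (a - ⟪u, z⟫)) • u = x := by
      have h4 : 2 * (a - ⟪u, z⟫) = d := by rw [ha_def]; ring
      rw [h4, hu_def, smul_smul, mul_inv_cancel₀ (ne_of_gt hd), one_smul]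
      abel
    rwa [hpt] at hrefl
  have key2 : ∀ x : Euc N, 0 < p x → ∀ z ∈ ball (0 : Euc N) (‖x‖ - 2 * R), 0 < p z := by
    intro x hx z hz
    rw [mem_ball, dist_zero_right] at hz
    exact lt_of_lt_of_le hx (key x z hz)
  refine ⟨key, key2, ?_⟩
  intro hne hbd
  set Ω : Set (Euc N) := {x : Euc N | 0 < p x} with hΩ
  set S : Set ℝ := {r : ℝ | 0 ≤ r ∧ ball (0 : Euc N) r ⊆ Ω} with hS
  obtain ⟨M, hM⟩ := hbd.subset_closedBall 0
  obtain ⟨x0, hx0⟩ := hne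
  have hM0 : 0 ≤ M := le_trans (norm_nonneg x0) (by simpa using hM hx0)
  have h0S : (0:ℝ) ∈ S := ⟨le_refl 0, by simp⟩
  have hRm : 0 ≤ sSup S := by
    by_cases hb : BddAbove S
    · exact le_csSup hb h0S
    · rw [Real.sSup_of_not_bddAbove hb]
  have hkey3 : ∀ x ∈ Ω, ‖x‖ ≤ sSup S + 2 * R := by
    intro x hx
    by_cases hcase : ‖x‖ ≤ 2 * R
    · linarith
    · push_neg at hcase
      have hxn : (0:ℝ) < ‖x‖ := by linarith
      have hball : ball (0 : Euc N) (‖x‖ - 2 * R) ⊆ Ω := fun z hz => key2 x hx z hz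
      have hSb : BddAbove S := by
        refine ⟨2 * M, fun r hr => ?_⟩
        rcases eq_or_lt_of_le hr.1 with h0 | h0
        · linarith
        · have hy : ((r / 2) / ‖x‖) • x ∈ ball (0 : Euc N) r := by
            rw [mem_ball, dist_zero_right, norm_smul, Real.norm_eq_abs,
              abs_of_nonneg (by positivity : (0:ℝ) ≤ (r / 2) / ‖x‖)]
            rw [div_mul_cancel₀ _ (ne_of_gt hxn)]
            linarith
          have := hM (hr.2 hy)
          rw [mem_closedBall, dist_zero_right, norm_smul, Real.norm_eq_abs,
            abs_of_nonneg (by positivity : (0:ℝ) ≤ (r / 2) / ‖x‖),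
            div_mul_cancel₀ _ (ne_of_gt hxn)] at this
          linarith
      have : ‖x‖ - 2 * R ∈ S := ⟨by linarith, hball⟩
      have := le_csSup hSb this
      linarith
  have hsup : sSup (norm '' Ω) ≤ sSup S + 2 * R := by
    have hnei : (norm '' Ω).Nonempty := ⟨‖x0‖, ⟨x0, hx0, rfl⟩⟩
    apply csSup_le hnei
    rintro y ⟨x, hx, rfl⟩
    exact hkey3 x hx
  linarith
end
end

section
/- Let U ⊆ ℝ^N be a nonempty bounded open set and let f ∈ L¹(ℝ^N) satisfy f ≥ 1 a.e. on U. Then for every δ > 0 there exists η > 0 such that every g ∈ L¹(ℝ^N) with ‖g − f‖_{L¹(ℝ^N)} < η satisfies: for every x ∈ U, the set {y ∈ B_δ(x) : g(y) > 0} has positive Lebesgue measure; in particular U is contained in the open δ-neighborhood V_δ({g > 0}) of the positivity set of (any representative of) g. -/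
open MeasureTheory Metric Set Filter Real
open scoped ENNReal RealInnerProductSpace

noncomputable section

/-!
If `g ≤ 0` a.e. on `ball x δ` for some `x ∈ U`, then `|g - f| ≥ 1` a.e. on `U ∩ ball x δ`, so
`‖g - f‖₁ ≥ |U ∩ ball x δ|`. Total boundedness of `U` bounds `|U ∩ ball x δ|` below uniformly in
`x ∈ U`: finitely many balls `ball c (δ / 2)` with `c ∈ U` cover `U`, each meets the open set `U`
in positive measure, and `ball x δ` contains the one around `x`.
-/

open Topology

theorem exists_pos_forall_ofReal_le_measure_inter_ball {X : Type*} [PseudoMetricSpace X]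
    [MeasurableSpace X] (μ : Measure X) [μ.IsOpenPosMeasure] {U : Set X} (hUopen : IsOpen U)
    (hU : TotallyBounded U) {δ : ℝ} (hδ : 0 < δ) :
    ∃ η : ℝ, 0 < η ∧ ∀ x ∈ U, ENNReal.ofReal η ≤ μ (U ∩ ball x δ) := by
  obtain ⟨t, htU, ht, hcover⟩ := finite_approx_of_totallyBounded hU (δ / 2) (half_pos hδ)
  have hsmall : ∀ᶠ η in 𝓝[>] (0 : ℝ), ∀ c ∈ t, ENNReal.ofReal η < μ (U ∩ ball c (δ / 2)) := by
    refine (ht.eventually_all).2 fun c hc => nhdsWithin_le_nhds ?_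
    have hpos : 0 < μ (U ∩ ball c (δ / 2)) :=
      (hUopen.inter isOpen_ball).measure_pos μ ⟨c, htU hc, mem_ball_self (half_pos hδ)⟩
    exact ENNReal.continuous_ofReal.continuousAt.eventually_lt continuousAt_const
      (by simpa using hpos)
  obtain ⟨η, hηt, hη⟩ := (hsmall.and self_mem_nhdsWithin).exists
  refine ⟨η, hη, fun x hx => ?_⟩
  obtain ⟨c, hc, hxc⟩ := mem_iUnion₂.1 (hcover hx)
  refine (hηt c hc).le.trans (measure_mono (inter_subset_inter_right U fun y hy => ?_))
  have := dist_triangle_right y x c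
  rw [mem_ball] at hy hxc ⊢
  linarith

theorem measure_le_lintegral_enorm_sub {α : Type*} [MeasurableSpace α] {μ : Measure α}
    {s : Set α} (hs : MeasurableSet s) {f g : α → ℝ} (hf : ∀ᵐ x ∂μ, x ∈ s → 1 ≤ f x)
    (hg : ∀ᵐ x ∂μ, x ∈ s → g x ≤ 0) : μ s ≤ ∫⁻ x, ‖g x - f x‖ₑ ∂μ :=
  calc μ s = ∫⁻ _ in s, 1 ∂μ := (setLIntegral_one s).symm
    _ ≤ ∫⁻ x in s, ‖g x - f x‖ₑ ∂μ := by
      refine lintegral_mono_ae ((ae_restrict_iff' hs).2 ?_)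
      filter_upwards [hf, hg] with x hfx hgx hx
      rw [Real.enorm_eq_ofReal_abs, ENNReal.one_le_ofReal, abs_sub_comm]
      exact (by linarith [hfx hx, hgx hx] : 1 ≤ f x - g x).trans (le_abs_self _)
    _ ≤ ∫⁻ x, ‖g x - f x‖ₑ ∂μ := setLIntegral_le_lintegral s _

theorem L1_stability_positivity_general {N : ℕ}
    (U : Set (Euc N)) (hUopen : IsOpen U)
    (hUbdd : Bornology.IsBounded U)
    (f : Euc N → ℝ) (hf : Integrable f) (hf1 : ∀ᵐ x : Euc N ∂volume, x ∈ U → 1 ≤ f x)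
    (δ : ℝ) (hδ : 0 < δ) :
    ∃ η : ℝ, 0 < η ∧ ∀ g : Euc N → ℝ, Integrable g → (∫ x, |g x - f x|) < η →
      (∀ x ∈ U, 0 < volume {y : Euc N | y ∈ ball x δ ∧ 0 < g y}) ∧
      U ⊆ {x : Euc N | ∃ y : Euc N, 0 < g y ∧ dist x y < δ} := by
  obtain ⟨η, hη, hηU⟩ := exists_pos_forall_ofReal_le_measure_inter_ball volume hUopen
    (hUbdd.isCompact_closure.totallyBounded.subset subset_closure) hδ
  refine ⟨η, hη, fun g hg hgf => ?_⟩
  have hpos : ∀ x ∈ U, 0 < volume {y : Euc N | y ∈ ball x δ ∧ 0 < g y} := by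
    intro x hx
    refine pos_iff_ne_zero.2 fun hzero => ?_
    have hg0 : ∀ᵐ y, y ∈ U ∩ ball x δ → g y ≤ 0 := by
      filter_upwards [measure_eq_zero_iff_ae_notMem.1 hzero] with y hy hyU
      exact not_lt.1 fun hgy => hy ⟨hyU.2, hgy⟩
    have hle := (hηU x hx).trans <| measure_le_lintegral_enorm_sub
      (hUopen.inter isOpen_ball).measurableSet (hf1.mono fun y hy hyU => hy hyU.1) hg0
    rw [← ofReal_integral_norm_eq_lintegral_enorm (f := fun y => g y - f y) (hg.sub hf),
      ENNReal.ofReal_le_ofReal_iff (integral_nonneg fun _ => norm_nonneg _)] at hle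
    simp only [Real.norm_eq_abs] at hle
    linarith
  refine ⟨hpos, fun x hx => ?_⟩
  obtain ⟨y, hy, hgy⟩ := nonempty_of_measure_ne_zero (hpos x hx).ne'
  exact ⟨y, hgy, mem_ball'.1 hy⟩

/-- **L¹-stability of positivity sets (proof of Lemma 7.2).** If `f ≥ 1` a.e. on a
nonempty bounded open set `U`, then any `g` close enough to `f` in `L¹` has, around each
point of `U`, a set of positivity of positive measure within distance `δ`; in particular
`U ⊆ V_δ({g > 0})`. -/
theorem L1_stability_positivity {N : ℕ} (hN : 1 ≤ N)
    (U : Set (Euc N)) (hUopen : IsOpen U) (hUne : U.Nonempty)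
    (hUbdd : Bornology.IsBounded U)
    (f : Euc N → ℝ) (hf : Integrable f) (hf1 : ∀ᵐ x : Euc N ∂volume, x ∈ U → 1 ≤ f x)
    (δ : ℝ) (hδ : 0 < δ) :
    ∃ η : ℝ, 0 < η ∧ ∀ g : Euc N → ℝ, Integrable g → (∫ x, |g x - f x|) < η →
      (∀ x ∈ U, 0 < volume {y : Euc N | y ∈ ball x δ ∧ 0 < g y}) ∧
      U ⊆ {x : Euc N | ∃ y : Euc N, 0 < g y ∧ dist x y < δ} :=
  L1_stability_positivity_general U hUopen hUbdd f hf hf1 δ hδ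
end
end
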